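/- In the decentralized finite-sum setting with the D-GET algorithm, for every iteration r ≥ 1 with q not dividing r, the following one-step error recursions hold: E‖ȳ^r − (1/m)∑_{i=1}^m ∇f^i(x_i^r)‖² ≤ E‖ȳ^{r-1} − (1/m)∑_{i=1}^m ∇f^i(x_i^{r-1})‖² + (L²/(m|S₂|))·E‖x^r − x^{r-1}‖², and E‖v^r − G(x^r)‖² ≤ E‖v^{r-1} − G(x^{r-1})‖² + (L²/|S₂|)·E‖x^r − x^{r-1}‖². -/

import Mathlib

open Finset MeasureTheory ProbabilityTheory

noncomputable section

/-- Euclidean space `ℝ^d`. -/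
abbrev Vec (d : ℕ) := EuclideanSpace ℝ (Fin d)

/-- Stacked space `(ℝ^d)^m` with the Euclidean (ℓ²) norm. -/
abbrev Stack (m d : ℕ) := PiLp 2 (fun _ : Fin m => Vec d)

/-- Blockwise action of an `m × m` matrix on `(ℝ^d)^m`. -/
def Wact {m d : ℕ} (W : Matrix (Fin m) (Fin m) ℝ) (x : Stack m d) : Stack m d :=
  WithLp.toLp 2 (fun i => ∑ k, W i k • x k)

/-- Matrix-vector product, valued in Euclidean space. -/
def mulVecE {m : ℕ} (W : Matrix (Fin m) (Fin m) ℝ) (u : Vec m) : Vec m :=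
  WithLp.toLp 2 (fun i => ∑ k, W i k * u k)

/-- Block average `x̄ = (1/m) ∑ᵢ xᵢ`. -/
def blockAvg {m d : ℕ} (x : Stack m d) : Vec d := (m : ℝ)⁻¹ • ∑ i, x i

/-- The stacked vector `𝟙 u` all of whose `m` blocks equal `u`. -/
def oneVec {m d : ℕ} (u : Vec d) : Stack m d := WithLp.toLp 2 (fun _ => u)

/-- Local cost of node `i` in the finite-sum setting: `fᶦ = (1/n) ∑ⱼ fᶦⱼ`. -/
def fLoc {m d n : ℕ} (f : Fin m → Fin n → Vec d → ℝ) (i : Fin m) : Vec d → ℝ :=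
  fun w => (n : ℝ)⁻¹ * ∑ j, f i j w

/-- Global cost `f = (1/m) ∑ᵢ fᶦ`. -/
def fTot {m d n : ℕ} (f : Fin m → Fin n → Vec d → ℝ) : Vec d → ℝ :=
  fun w => (m : ℝ)⁻¹ * ∑ i, fLoc f i w

/-- Stacked gradient `G(x) = (∇f¹(x₁),…,∇fᵐ(x_m))`. -/
def Gmap {m d n : ℕ} (f : Fin m → Fin n → Vec d → ℝ) (x : Stack m d) : Stack m d :=
  WithLp.toLp 2 (fun i => gradient (fLoc f i) (x i))

/-- Network-average gradient `(1/m) ∑ᵢ ∇fᶦ(xᵢ)`. -/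
def avgGrad {m d n : ℕ} (f : Fin m → Fin n → Vec d → ℝ) (x : Stack m d) : Vec d :=
  (m : ℝ)⁻¹ • ∑ i, gradient (fLoc f i) (x i)

/-!
At a step without a full gradient evaluation, the estimator error `v^{r+1} - G(x^{r+1})` is the
previous error plus, in each block `i`, the average of `|S₂|` centered gradient differences
`∇f^i_j(x^{r+1}_i) - ∇f^i_j(x^r_i) - (∇f^i(x^{r+1}_i) - ∇f^i(x^r_i))` at freshly drawn `j`.
These indices are uniform and independent of each other and of all earlier samples, which
determine `x^r`, `x^{r+1}` and `v^r`; the differences have mean zero, so the cross terms vanish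
in expectation and the squared error grows only by the variance of the noise. A variance is at
most the second moment, here at most `L² ‖x^{r+1}_i - x^r_i‖²`. In the network average the
`m |S₂|` noise terms are independent, which gives the extra factor `1/m`; gradient tracking with
a doubly stochastic `W` keeps `ȳ^r = v̄^r`. As the iterates depend on finitely many discrete
samples, all expectations are finite sums.
-/

open scoped BigOperators RealInnerProductSpace

section UniformChoices
variable {E : Type*} [NormedAddCommGroup E] [InnerProductSpace ℝ E]
  {ι : Type*} [Fintype ι] [Nonempty ι]

theorem expect_norm_add_sq_of_sum_eq_zero (a : E) {h : ι → E} (hz : ∑ j, h j = 0) :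
    𝔼 j, ‖a + h j‖ ^ 2 = ‖a‖ ^ 2 + 𝔼 j, ‖h j‖ ^ 2 := by
  have hcross : 𝔼 j, 2 * ⟪a, h j⟫ = 0 := by
    rw [Fintype.expect_eq_sum_div_card, ← mul_sum, ← inner_sum, hz, inner_zero_right, mul_zero,
      zero_div]
  simp_rw [norm_add_sq_real]
  rw [expect_add_distrib, expect_add_distrib, Fintype.expect_const, hcross, add_zero]

theorem expect_norm_add_sum_sq_fin {k : ℕ} (a : E) (h : Fin k → ι → E)
    (hz : ∀ p, ∑ j, h p j = 0) :
    𝔼 c : Fin k → ι, ‖a + ∑ p, h p (c p)‖ ^ 2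
      = ‖a‖ ^ 2 + ∑ p, 𝔼 j, ‖h p j‖ ^ 2 := by
  induction k generalizing a with
  | zero => simp
  | succ k ih =>
    rw [← Fintype.expect_equiv (Fin.consEquiv fun _ => ι)
      (fun jc => ‖a + ∑ p, h p ((Fin.cons jc.1 jc.2 : Fin (k + 1) → ι) p)‖ ^ 2)
      (fun c => ‖a + ∑ p, h p (c p)‖ ^ 2) fun _ => rfl,
      ← univ_product_univ, expect_product' univ univ
        fun j c => ‖a + ∑ p, h p ((Fin.cons j c : Fin (k + 1) → ι) p)‖ ^ 2]
    simp only [Fin.sum_univ_succ, Fin.cons_zero, Fin.cons_succ, ← add_assoc]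
    simp only [ih _ (fun p => h p.succ) (fun p => hz p.succ)]
    rw [expect_add_distrib, Fintype.expect_const, expect_norm_add_sq_of_sum_eq_zero a (hz 0)]

theorem expect_norm_add_sum_sq {P : Type*} [Fintype P] [DecidableEq P] (a : E) (h : P → ι → E)
    (hz : ∀ p, ∑ j, h p j = 0) :
    𝔼 c : P → ι, ‖a + ∑ p, h p (c p)‖ ^ 2
      = ‖a‖ ^ 2 + ∑ p, 𝔼 j, ‖h p j‖ ^ 2 := by
  let e := Fintype.equivFin P
  rw [Fintype.expect_equiv (e.arrowCongr (Equiv.refl ι)) _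
    (fun c => ‖a + ∑ p, h (e.symm p) (c p)‖ ^ 2) fun c => by
      simp [← e.sum_comp]]
  rw [expect_norm_add_sum_sq_fin a _ fun p => hz _, ← e.symm.sum_comp]

end UniformChoices

section Expectation
variable {Ω : Type*} [MeasurableSpace Ω] {μ : Measure Ω} [IsProbabilityMeasure μ]
  {τ κ : Type*} [Fintype τ] [MeasurableSpace τ] [MeasurableSingletonClass τ]
  [Fintype κ] [MeasurableSpace κ] [MeasurableSingletonClass κ] {T : Ω → τ} {K : Ω → κ}

theorem integral_comp_eq_sum (hT : Measurable T) (g : τ → ℝ) :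
    ∫ ω, g (T ω) ∂μ = ∑ t, μ.real (T ⁻¹' {t}) * g t := by
  rw [← integral_map hT.aemeasurable (by fun_prop), integral_fintype Integrable.of_finite]
  simp [map_measureReal_apply hT (measurableSet_singleton _)]

theorem integral_comp_eq_integral_expect (hT : Measurable T) (hK : Measurable K)
    (hTK : IndepFun T K μ) (hKunif : ∀ c, μ.real (K ⁻¹' {c}) = (Fintype.card κ : ℝ)⁻¹)
    (φ : τ → κ → ℝ) :
    ∫ ω, φ (T ω) (K ω) ∂μ = ∫ ω, 𝔼 c, φ (T ω) c ∂μ := by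
  have hjoint : ∀ t c, μ.real ((fun ω => (T ω, K ω)) ⁻¹' {(t, c)})
      = μ.real (T ⁻¹' {t}) * (Fintype.card κ : ℝ)⁻¹ := by
    intro t c
    have hpre : (fun ω => (T ω, K ω)) ⁻¹' {(t, c)} = T ⁻¹' {t} ∩ K ⁻¹' {c} := by
      ext; simp
    rw [← hKunif c, hpre, measureReal_def, hTK.measure_inter_preimage_eq_mul _ _
      (measurableSet_singleton t) (measurableSet_singleton c), ENNReal.toReal_mul]
    rfl
  rw [integral_comp_eq_sum (hT.prodMk hK) (fun tc => φ tc.1 tc.2),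
    integral_comp_eq_sum hT fun t => 𝔼 c, φ t c, Fintype.sum_prod_type]
  refine sum_congr rfl fun t _ => ?_
  simp only [hjoint, Fintype.expect_eq_sum_div_card, div_eq_mul_inv, sum_mul, mul_sum]
  exact sum_congr rfl fun c _ => by ring

theorem integral_le_add_mul_of_expect_le {σ : Type*} {S : Ω → σ} (hT : Measurable T)
    (hK : Measurable K) (hTK : IndepFun T K μ)
    (hKunif : ∀ c, μ.real (K ⁻¹' {c}) = (Fintype.card κ : ℝ)⁻¹)
    (hS : Function.FactorsThrough S T) {φ : σ → κ → ℝ} {a b : σ → ℝ} {C : ℝ}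
    (h : ∀ s, 𝔼 c, φ s c ≤ a s + C * b s) :
    ∫ ω, φ (S ω) (K ω) ∂μ ≤ ∫ ω, a (S ω) ∂μ + C * ∫ ω, b (S ω) ∂μ := by
  obtain ⟨ω₀⟩ := nonempty_of_isProbabilityMeasure μ
  set S' := Function.extend T S fun _ => S ω₀
  have hS' : ∀ ω, S ω = S' (T ω) := fun ω => (hS.extend_apply _ ω).symm
  have hint : ∀ g : τ → ℝ, Integrable (fun ω => g (T ω)) μ := fun g =>
    Integrable.of_finite.comp_measurable hT
  simp only [hS']
  rw [integral_comp_eq_integral_expect hT hK hTK hKunif fun t => φ (S' t), ← integral_const_mul,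
    ← integral_add (hint fun t => a (S' t)) (hint fun t => C * b (S' t))]
  exact integral_mono (hint fun t => 𝔼 c, φ (S' t) c) (hint fun t => a (S' t) + C * b (S' t))
    fun ω => h _

end Expectation

section IidSamples
variable {Ω : Type*} [MeasurableSpace Ω] {μ : Measure Ω} {ι : Type*} {n : ℕ}
  {X : ι → Ω → Fin n}

theorem measureReal_samples_eq_inv_card (hX : iIndepFun X μ)
    (hunif : ∀ i j, μ {ω | X i ω = j} = (n : ENNReal)⁻¹) {α : Type*} [Fintype α]
    [DecidableEq α] {e : α → ι} (he : Function.Injective e) (c : α → Fin n) :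
    μ.real ((fun ω a => X (e a) ω) ⁻¹' {c}) = (Fintype.card (α → Fin n) : ℝ)⁻¹ := by
  have hpre : (fun ω a => X (e a) ω) ⁻¹' {c} = ⋂ a, X (e a) ⁻¹' {c a} := by
    ext; simp [funext_iff]
  rw [measureReal_def, hpre,
    (hX.precomp he).meas_iInter fun a => ⟨{c a}, measurableSet_singleton _, rfl⟩]
  have hunif' : ∀ i j, μ (X i ⁻¹' {j}) = (n : ENNReal)⁻¹ := hunif
  simp [hunif']

theorem indepFun_samples (hX : iIndepFun X μ) (hXm : ∀ i, Measurable (X i)) (s : Finset ι)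
    {α : Type*} [Fintype α] {e : α → ι} (he : ∀ a, e a ∉ s) :
    IndepFun (fun ω (i : s) => X i ω) (fun ω a => X (e a) ω) μ := by
  classical
  have hdisj : Disjoint s (univ.image e) :=
    disjoint_left.2 fun i hi hi' => by
      obtain ⟨a, -, rfl⟩ := mem_image.1 hi'
      exact he a hi
  exact (hX.indepFun_finset s _ hdisj hXm).comp measurable_id
    (measurable_pi_lambda (fun u a => u ⟨e a, mem_image_of_mem e (mem_univ a)⟩)
      fun a => measurable_pi_apply _)

end IidSamples

theorem integral_le_of_next_batch {Ω : Type*} [MeasurableSpace Ω] {μ : Measure Ω}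
    [IsProbabilityMeasure μ] {m n S2 : ℕ} {J : ℕ → Fin S2 → Fin m → Ω → Fin n}
    (hJmeas : ∀ r b i, Measurable (J r b i))
    (hJunif : ∀ r b i j, μ {ω | J r b i ω = j} = (n : ENNReal)⁻¹)
    (hJindep : iIndepFun (fun p : ℕ × Fin S2 × Fin m => J p.1 p.2.1 p.2.2) μ)
    {σ : Type*} {S : Ω → σ} (r : ℕ)
    (hS : ∀ ω ω', (∀ s ≤ r, ∀ b i, J s b i ω = J s b i ω') → S ω = S ω')
    {φ : σ → (Fin S2 × Fin m → Fin n) → ℝ} {a b : σ → ℝ} {C : ℝ}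
    (h : ∀ s, 𝔼 c, φ s c ≤ a s + C * b s) :
    ∫ ω, φ (S ω) (fun p => J (r + 1) p.1 p.2 ω) ∂μ
      ≤ ∫ ω, a (S ω) ∂μ + C * ∫ ω, b (S ω) ∂μ := by
  set X : ℕ × Fin S2 × Fin m → Ω → Fin n := fun p => J p.1 p.2.1 p.2.2
  set T := fun ω (p : ↥(Iic r ×ˢ (univ : Finset (Fin S2 × Fin m)))) => X p ω
  have hTK : IndepFun T (fun ω p => X (r + 1, p) ω) μ :=
    indepFun_samples hJindep (fun p => hJmeas _ _ _) _ (by simp)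
  refine integral_le_add_mul_of_expect_le (measurable_pi_lambda _ fun p => hJmeas _ _ _)
    (measurable_pi_lambda _ fun p => hJmeas _ _ _) hTK
    (measureReal_samples_eq_inv_card hJindep (fun p => hJunif p.1 p.2.1 p.2.2)
      (Prod.mk_right_injective _)) (fun ω ω' hT => hS ω ω' fun s hs b i => ?_) h
  exact congrFun hT ⟨(s, b, i), by simp [hs]⟩

section BlockAverage
variable {m d : ℕ}

theorem blockAvg_zero : blockAvg (0 : Stack m d) = 0 := by
  simp [blockAvg]

theorem blockAvg_add (a b : Stack m d) : blockAvg (a + b) = blockAvg a + blockAvg b := by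
  simp [blockAvg, sum_add_distrib, smul_add]

theorem blockAvg_sub (a b : Stack m d) : blockAvg (a - b) = blockAvg a - blockAvg b := by
  simp [blockAvg, sum_sub_distrib, smul_sub]

theorem blockAvg_sum {ι : Type*} (s : Finset ι) (g : ι → Stack m d) :
    blockAvg (∑ k ∈ s, g k) = ∑ k ∈ s, blockAvg (g k) := by
  simp only [blockAvg, ← smul_sum]
  rw [sum_comm]
  simp

theorem blockAvg_Wact {W : Matrix (Fin m) (Fin m) ℝ} (hW : ∀ k, ∑ i, W i k = 1)
    (z : Stack m d) : blockAvg (Wact W z) = blockAvg z := by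
  simp only [blockAvg, Wact, PiLp.toLp_apply]
  rw [sum_comm]
  simp [← sum_smul, hW]

end BlockAverage

theorem Matrix.IsSymm.sum_apply_eq_one {m : ℕ} {W : Matrix (Fin m) (Fin m) ℝ} (hW : W.IsSymm)
    (hW1 : W.mulVec (fun _ => (1 : ℝ)) = fun _ => (1 : ℝ)) (k : Fin m) : ∑ i, W i k = 1 := by
  simpa [Matrix.mulVec, dotProduct, hW.apply] using congrFun hW1 k

section Gradients
variable {m d n : ℕ} (f : Fin m → Fin n → Vec d → ℝ)

theorem gradient_fLoc (hdiff : ∀ i j, Differentiable ℝ (f i j)) (i : Fin m) (u : Vec d) :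
    gradient (fLoc f i) u = (n : ℝ)⁻¹ • ∑ j, gradient (f i j) u := by
  have hsum : HasFDerivAt (fun w => ∑ j, f i j w) (∑ j, fderiv ℝ (f i j) u) u :=
    HasFDerivAt.fun_sum fun j _ => (hdiff i j u).hasFDerivAt
  unfold gradient fLoc
  rw [(hsum.const_mul _).fderiv, _root_.map_smul, map_sum]

def gradNoise (x x' : Stack m d) (i : Fin m) (j : Fin n) : Vec d :=
  (gradient (f i j) (x' i) - gradient (f i j) (x i))
    - (gradient (fLoc f i) (x' i) - gradient (fLoc f i) (x i))

variable {f}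

theorem sum_gradNoise [NeZero n] (hdiff : ∀ i j, Differentiable ℝ (f i j))
    (x x' : Stack m d) (i : Fin m) : ∑ j, gradNoise f x x' i j = 0 := by
  simp only [gradNoise, sum_sub_distrib, sum_const, card_univ, Fintype.card_fin,
    gradient_fLoc f hdiff, ← smul_sub, ← Nat.cast_smul_eq_nsmul ℝ, smul_smul,
    mul_inv_cancel₀ (NeZero.ne (n : ℝ)), one_smul, sub_self]

theorem expect_norm_gradNoise_sq_le [NeZero n] (hdiff : ∀ i j, Differentiable ℝ (f i j))
    {L : ℝ} (hlip : ∀ i j (u u' : Vec d),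
      ‖gradient (f i j) u - gradient (f i j) u'‖ ≤ L * ‖u - u'‖)
    (x x' : Stack m d) (i : Fin m) :
    𝔼 j, ‖gradNoise f x x' i j‖ ^ 2 ≤ L ^ 2 * ‖x' i - x i‖ ^ 2 := by
  set w := gradient (fLoc f i) (x' i) - gradient (fLoc f i) (x i)
  calc 𝔼 j, ‖gradNoise f x x' i j‖ ^ 2
      ≤ ‖w‖ ^ 2 + 𝔼 j, ‖gradNoise f x x' i j‖ ^ 2 :=
        le_add_of_nonneg_left (sq_nonneg _)
    _ = 𝔼 j, ‖w + gradNoise f x x' i j‖ ^ 2 :=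
        (expect_norm_add_sq_of_sum_eq_zero w (sum_gradNoise hdiff x x' i)).symm
    _ = 𝔼 j, ‖gradient (f i j) (x' i) - gradient (f i j) (x i)‖ ^ 2 := by
        simp only [gradNoise, w, add_sub_cancel]
    _ ≤ L ^ 2 * ‖x' i - x i‖ ^ 2 :=
        expect_le univ_nonempty fun j _ => by
          rw [← mul_pow]; exact pow_le_pow_left₀ (norm_nonneg _) (hlip i j _ _) 2

theorem sum_expect_norm_gradNoise_sq_le [NeZero n] (hdiff : ∀ i j, Differentiable ℝ (f i j))
    {L : ℝ} (hlip : ∀ i j (u u' : Vec d),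
      ‖gradient (f i j) u - gradient (f i j) u'‖ ≤ L * ‖u - u'‖)
    (x x' : Stack m d) :
    ∑ i, 𝔼 j, ‖gradNoise f x x' i j‖ ^ 2 ≤ L ^ 2 * ‖x' - x‖ ^ 2 := by
  rw [PiLp.norm_sq_eq_of_L2, mul_sum]
  exact sum_le_sum fun i _ => expect_norm_gradNoise_sq_le hdiff hlip x x' i

end Gradients

section BatchNoise
variable {m d n S2 : ℕ} {f : Fin m → Fin n → Vec d → ℝ}

def batchNoise (f : Fin m → Fin n → Vec d → ℝ) (S2 : ℕ) (x x' : Stack m d)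
    (p : Fin S2 × Fin m) (j : Fin n) : Stack m d :=
  (S2 : ℝ)⁻¹ • PiLp.single 2 p.2 (gradNoise f x x' p.2 j)

theorem sum_batchNoise [NeZero n] (hdiff : ∀ i j, Differentiable ℝ (f i j))
    (x x' : Stack m d) (p : Fin S2 × Fin m) : ∑ j, batchNoise f S2 x x' p j = 0 := by
  ext1 k
  simp [batchNoise, Pi.single_apply, ← smul_sum, sum_gradNoise hdiff]

theorem sub_Gmap_eq_add_sum_batchNoise (hS2 : S2 ≠ 0) {x x' v v' : Stack m d}
    (c : Fin S2 × Fin m → Fin n)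
    (hv' : ∀ i, v' i = (S2 : ℝ)⁻¹ • ∑ b, (gradient (f i (c (b, i))) (x' i)
      - gradient (f i (c (b, i))) (x i)) + v i) :
    v' - Gmap f x' = (v - Gmap f x) + ∑ p, batchNoise f S2 x x' p (c p) := by
  ext1 i
  simp [hv', batchNoise, Gmap, gradNoise, Fintype.sum_prod_type, Pi.single_apply]
  rw [← smul_sum, sum_sub_distrib, sum_const, card_univ, Fintype.card_fin,
    ← Nat.cast_smul_eq_nsmul ℝ, smul_sub _ _ ((S2 : ℝ) • _), smul_smul,
    inv_mul_cancel₀ (Nat.cast_ne_zero.2 hS2), one_smul, sum_sub_distrib]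
  abel

theorem sum_expect_norm_sq_le_of_norm_eq [NeZero n] {E : Type*} [NormedAddCommGroup E]
    (hdiff : ∀ i j, Differentiable ℝ (f i j))
    {L : ℝ} (hlip : ∀ i j (u u' : Vec d),
      ‖gradient (f i j) u - gradient (f i j) u'‖ ≤ L * ‖u - u'‖)
    {x x' : Stack m d} {h : Fin S2 × Fin m → Fin n → E} {κ : ℝ}
    (hh : ∀ p j, ‖h p j‖ = κ * ‖gradNoise f x x' p.2 j‖) :
    ∑ p, 𝔼 j, ‖h p j‖ ^ 2 ≤ κ ^ 2 * S2 * (L ^ 2 * ‖x' - x‖ ^ 2) := by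
  simp_rw [hh, mul_pow, ← mul_expect]
  rw [Fintype.sum_prod_type]
  simp only [← mul_sum, sum_const, card_univ, Fintype.card_fin, nsmul_eq_mul, mul_assoc]
  gcongr
  exact sum_expect_norm_gradNoise_sq_le hdiff hlip x x'

theorem expect_norm_add_sum_batchNoise_sq_le [NeZero n]
    (hdiff : ∀ i j, Differentiable ℝ (f i j)) {L : ℝ} (hlip : ∀ i j (u u' : Vec d),
      ‖gradient (f i j) u - gradient (f i j) u'‖ ≤ L * ‖u - u'‖) (e x x' : Stack m d) :
    𝔼 c : Fin S2 × Fin m → Fin n, ‖e + ∑ p, batchNoise f S2 x x' p (c p)‖ ^ 2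
      ≤ ‖e‖ ^ 2 + L ^ 2 / S2 * ‖x' - x‖ ^ 2 := by
  have hnorm : ∀ p j,
      ‖batchNoise f S2 x x' p j‖ = (S2 : ℝ)⁻¹ * ‖gradNoise f x x' p.2 j‖ := by
    simp [batchNoise, norm_smul, PiLp.norm_single]
  have hS2 : ((S2 : ℝ)⁻¹) ^ 2 * S2 = (S2 : ℝ)⁻¹ := by
    rw [inv_pow, ← div_eq_inv_mul, sq, div_self_mul_self']
  rw [expect_norm_add_sum_sq e _ (sum_batchNoise hdiff x x')]
  calc _ ≤ ‖e‖ ^ 2 + ((S2 : ℝ)⁻¹) ^ 2 * S2 * (L ^ 2 * ‖x' - x‖ ^ 2) :=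
        by gcongr; exact sum_expect_norm_sq_le_of_norm_eq hdiff hlip hnorm
    _ = _ := by rw [hS2]; ring

theorem expect_norm_blockAvg_add_sum_batchNoise_sq_le [NeZero n]
    (hdiff : ∀ i j, Differentiable ℝ (f i j)) {L : ℝ} (hlip : ∀ i j (u u' : Vec d),
      ‖gradient (f i j) u - gradient (f i j) u'‖ ≤ L * ‖u - u'‖) (e x x' : Stack m d) :
    𝔼 c : Fin S2 × Fin m → Fin n, ‖blockAvg (e + ∑ p, batchNoise f S2 x x' p (c p))‖ ^ 2
      ≤ ‖blockAvg e‖ ^ 2 + L ^ 2 / (m * S2) * ‖x' - x‖ ^ 2 := by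
  have hz : ∀ p, ∑ j, blockAvg (batchNoise f S2 x x' p j) = 0 := fun p => by
    rw [← blockAvg_sum, sum_batchNoise hdiff, blockAvg_zero]
  have hnorm : ∀ p j, ‖blockAvg (batchNoise f S2 x x' p j)‖
      = ((m : ℝ)⁻¹ * (S2 : ℝ)⁻¹) * ‖gradNoise f x x' p.2 j‖ := by
    simp [blockAvg, batchNoise, norm_smul, smul_smul]
  have hm : ((m : ℝ)⁻¹ * (S2 : ℝ)⁻¹) ^ 2 * S2 ≤ ((m : ℝ) * S2)⁻¹ := by
    rw [mul_pow, mul_assoc, inv_pow (S2 : ℝ), ← div_eq_inv_mul, sq (S2 : ℝ),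
      div_self_mul_self', mul_inv]
    gcongr
    exact pow_le_of_le_one (by positivity) (Nat.cast_inv_le_one m) two_ne_zero
  simp only [blockAvg_add, blockAvg_sum]
  rw [expect_norm_add_sum_sq _ _ hz]
  calc _ ≤ ‖blockAvg e‖ ^ 2
        + ((m : ℝ)⁻¹ * (S2 : ℝ)⁻¹) ^ 2 * S2 * (L ^ 2 * ‖x' - x‖ ^ 2) :=
        by gcongr; exact sum_expect_norm_sq_le_of_norm_eq hdiff hlip hnorm
    _ ≤ ‖blockAvg e‖ ^ 2 + ((m : ℝ) * S2)⁻¹ * (L ^ 2 * ‖x' - x‖ ^ 2) := by gcongr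
    _ = _ := by ring

end BatchNoise

section Iterates
variable {Ω : Type*} {m d n q S2 : ℕ} {α : ℝ} {f : Fin m → Fin n → Vec d → ℝ}
  {W : Matrix (Fin m) (Fin m) ℝ} {J : ℕ → Fin S2 → Fin m → Ω → Fin n} {x0 : Stack m d}
  {x v y : ℕ → Ω → Stack m d}

theorem blockAvg_y_eq_blockAvg_v (hW : ∀ k, ∑ i, W i k = 1) (hy0 : ∀ ω, y 0 ω = v 0 ω)
    (hyrec : ∀ r ω, y (r + 1) ω = Wact W (y r ω) + v (r + 1) ω - v r ω) (r : ℕ) (ω : Ω) :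
    blockAvg (y r ω) = blockAvg (v r ω) := by
  induction r with
  | zero => rw [hy0]
  | succ r ih => rw [hyrec, blockAvg_sub, blockAvg_add, blockAvg_Wact hW, ih, add_sub_cancel_left]

theorem iterates_eq_of_samples_eq (hx0 : ∀ ω, x 0 ω = x0) (hy0 : ∀ ω, y 0 ω = v 0 ω)
    (hxrec : ∀ r ω, x (r + 1) ω = Wact W (x r ω) - α • y r ω)
    (hvfull : ∀ r, q ∣ r → ∀ ω, v r ω = Gmap f (x r ω))
    (hvest : ∀ r, ¬ q ∣ (r + 1) → ∀ ω i, v (r + 1) ω i =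
      (S2 : ℝ)⁻¹ • ∑ b, (gradient (f i (J (r + 1) b i ω)) (x (r + 1) ω i)
        - gradient (f i (J (r + 1) b i ω)) (x r ω i)) + v r ω i)
    (hyrec : ∀ r ω, y (r + 1) ω = Wact W (y r ω) + v (r + 1) ω - v r ω) {ω ω' : Ω}
    (r : ℕ) (hJ : ∀ s ≤ r, ∀ b i, J s b i ω = J s b i ω') :
    x r ω = x r ω' ∧ v r ω = v r ω' ∧ y r ω = y r ω' := by
  induction r with
  | zero =>
    have hx : x 0 ω = x 0 ω' := by rw [hx0, hx0]
    have hv : v 0 ω = v 0 ω' := by rw [hvfull 0 (dvd_zero q), hvfull 0 (dvd_zero q), hx]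
    exact ⟨hx, hv, by rw [hy0, hy0, hv]⟩
  | succ r ih =>
    obtain ⟨hx, hv, hy⟩ := ih fun s hs => hJ s (hs.trans r.le_succ)
    have hx' : x (r + 1) ω = x (r + 1) ω' := by rw [hxrec, hxrec, hx, hy]
    have hv' : v (r + 1) ω = v (r + 1) ω' := by
      by_cases hqr : q ∣ r + 1
      · rw [hvfull _ hqr, hvfull _ hqr, hx']
      · ext1 i
        simp only [hvest r hqr, hJ (r + 1) le_rfl, hx, hx', hv]
    exact ⟨hx', hv', by rw [hyrec, hyrec, hy, hv, hv']⟩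

end Iterates

theorem stmt10_general
    (m d n q S2 : ℕ) (hn : 0 < n) (hS2 : 0 < S2)
    (L α : ℝ)
    (f : Fin m → Fin n → Vec d → ℝ)
    (hdiff : ∀ i j, Differentiable ℝ (f i j))
    (hlip : ∀ i j (u u' : Vec d),
      ‖gradient (f i j) u - gradient (f i j) u'‖ ≤ L * ‖u - u'‖)
    (W : Matrix (Fin m) (Fin m) ℝ) (hWsymm : W.IsSymm)
    (hW1 : W.mulVec (fun _ => (1 : ℝ)) = fun _ => (1 : ℝ))
    (Ω : Type) [MeasurableSpace Ω] (μ : Measure Ω) [IsProbabilityMeasure μ]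
    (J : ℕ → Fin S2 → Fin m → Ω → Fin n)
    (hJmeas : ∀ r b i, Measurable (J r b i))
    (hJunif : ∀ r b i j, μ {ω | J r b i ω = j} = (n : ENNReal)⁻¹)
    (hJindep : iIndepFun
      (fun p : ℕ × Fin S2 × Fin m => J p.1 p.2.1 p.2.2) μ)
    (x0 : Stack m d) (x v y : ℕ → Ω → Stack m d)
    (hx0 : ∀ ω, x 0 ω = x0)
    (hy0 : ∀ ω, y 0 ω = v 0 ω)
    (hxrec : ∀ r ω, x (r + 1) ω = Wact W (x r ω) - α • y r ω)
    (hvfull : ∀ r, q ∣ r → ∀ ω, v r ω = Gmap f (x r ω))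
    (hvest : ∀ r, ¬ q ∣ (r + 1) → ∀ ω i, v (r + 1) ω i =
      (S2 : ℝ)⁻¹ • ∑ b, (gradient (f i (J (r + 1) b i ω)) (x (r + 1) ω i)
        - gradient (f i (J (r + 1) b i ω)) (x r ω i)) + v r ω i)
    (hyrec : ∀ r ω, y (r + 1) ω = Wact W (y r ω) + v (r + 1) ω - v r ω)
    :
    ∀ r : ℕ, ¬ q ∣ (r + 1) →
      ((∫ ω, ‖blockAvg (y (r + 1) ω) - avgGrad f (x (r + 1) ω)‖ ^ 2 ∂μ) ≤
          (∫ ω, ‖blockAvg (y r ω) - avgGrad f (x r ω)‖ ^ 2 ∂μ)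
          + L ^ 2 / ((m : ℝ) * S2) * ∫ ω, ‖x (r + 1) ω - x r ω‖ ^ 2 ∂μ) ∧
      ((∫ ω, ‖v (r + 1) ω - Gmap f (x (r + 1) ω)‖ ^ 2 ∂μ) ≤
          (∫ ω, ‖v r ω - Gmap f (x r ω)‖ ^ 2 ∂μ)
          + L ^ 2 / (S2 : ℝ) * ∫ ω, ‖x (r + 1) ω - x r ω‖ ^ 2 ∂μ) := by
  intro r hr
  have : NeZero n := ⟨hn.ne'⟩
  have hS : ∀ ω ω', (∀ s ≤ r, ∀ b i, J s b i ω = J s b i ω') →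
      (x r ω, x (r + 1) ω, v r ω) = (x r ω', x (r + 1) ω', v r ω') := fun ω ω' hJ => by
    obtain ⟨hx, hv, hy⟩ := iterates_eq_of_samples_eq hx0 hy0 hxrec hvfull hvest hyrec r hJ
    simp [hxrec, hx, hv, hy]
  have herr : ∀ ω, v (r + 1) ω - Gmap f (x (r + 1) ω) = (v r ω - Gmap f (x r ω))
      + ∑ p, batchNoise f S2 (x r ω) (x (r + 1) ω) p (J (r + 1) p.1 p.2 ω) := fun ω =>
    sub_Gmap_eq_add_sum_batchNoise hS2.ne' (fun p => J (r + 1) p.1 p.2 ω) (hvest r hr ω)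
  have hbar : ∀ s ω,
      blockAvg (y s ω) - avgGrad f (x s ω) = blockAvg (v s ω - Gmap f (x s ω)) := fun s ω => by
    rw [blockAvg_y_eq_blockAvg_v (hWsymm.sum_apply_eq_one hW1) hy0 hyrec, blockAvg_sub]
    rfl
  simp only [hbar, herr]
  exact ⟨integral_le_of_next_batch hJmeas hJunif hJindep r hS
      (φ := fun s c =>
        ‖blockAvg ((s.2.2 - Gmap f s.1) + ∑ p, batchNoise f S2 s.1 s.2.1 p (c p))‖ ^ 2)
      (a := fun s => ‖blockAvg (s.2.2 - Gmap f s.1)‖ ^ 2) (b := fun s => ‖s.2.1 - s.1‖ ^ 2)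
      fun s => expect_norm_blockAvg_add_sum_batchNoise_sq_le hdiff hlip _ _ _,
    integral_le_of_next_batch hJmeas hJunif hJindep r hS
      (φ := fun s c => ‖(s.2.2 - Gmap f s.1) + ∑ p, batchNoise f S2 s.1 s.2.1 p (c p)‖ ^ 2)
      (a := fun s => ‖s.2.2 - Gmap f s.1‖ ^ 2) (b := fun s => ‖s.2.1 - s.1‖ ^ 2)
      fun s => expect_norm_add_sum_batchNoise_sq_le hdiff hlip _ _ _⟩

/-- one-step recursions of the tracking and estimation errors at any
iteration `r ≥ 1` not divisible by `q` (stated for `r + 1` with `¬ q ∣ (r + 1)`). -/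
theorem stmt10
    (m d n q S2 : ℕ) (hm : 0 < m) (hn : 0 < n) (hq : 1 ≤ q) (hS2 : 0 < S2)
    (L η α : ℝ) (hL : 0 ≤ L) (hη0 : 0 ≤ η) (hη1 : η < 1) (hα : 0 < α)
    (f : Fin m → Fin n → Vec d → ℝ)
    (hdiff : ∀ i j, Differentiable ℝ (f i j))
    (hlip : ∀ i j (u u' : Vec d),
      ‖gradient (f i j) u - gradient (f i j) u'‖ ≤ L * ‖u - u'‖)
    (W : Matrix (Fin m) (Fin m) ℝ) (hWsymm : W.IsSymm)
    (hW1 : W.mulVec (fun _ => (1 : ℝ)) = fun _ => (1 : ℝ))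
    (hWcontract : ∀ u : Vec m, (∑ k, u k) = 0 → ‖mulVecE W u‖ ≤ η * ‖u‖)
    (Ω : Type) [MeasurableSpace Ω] (μ : Measure Ω) [IsProbabilityMeasure μ]
    (J : ℕ → Fin S2 → Fin m → Ω → Fin n)
    (hJmeas : ∀ r b i, Measurable (J r b i))
    (hJunif : ∀ r b i j, μ {ω | J r b i ω = j} = (n : ENNReal)⁻¹)
    (hJindep : iIndepFun
      (fun p : ℕ × Fin S2 × Fin m => J p.1 p.2.1 p.2.2) μ)
    (x0 : Stack m d) (x v y : ℕ → Ω → Stack m d)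
    (hx0 : ∀ ω, x 0 ω = x0)
    (hy0 : ∀ ω, y 0 ω = v 0 ω)
    (hxrec : ∀ r ω, x (r + 1) ω = Wact W (x r ω) - α • y r ω)
    (hvfull : ∀ r, q ∣ r → ∀ ω, v r ω = Gmap f (x r ω))
    (hvest : ∀ r, ¬ q ∣ (r + 1) → ∀ ω i, v (r + 1) ω i =
      (S2 : ℝ)⁻¹ • ∑ b, (gradient (f i (J (r + 1) b i ω)) (x (r + 1) ω i)
        - gradient (f i (J (r + 1) b i ω)) (x r ω i)) + v r ω i)
    (hyrec : ∀ r ω, y (r + 1) ω = Wact W (y r ω) + v (r + 1) ω - v r ω)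
    :
    ∀ r : ℕ, ¬ q ∣ (r + 1) →
      ((∫ ω, ‖blockAvg (y (r + 1) ω) - avgGrad f (x (r + 1) ω)‖ ^ 2 ∂μ) ≤
          (∫ ω, ‖blockAvg (y r ω) - avgGrad f (x r ω)‖ ^ 2 ∂μ)
          + L ^ 2 / ((m : ℝ) * S2) * ∫ ω, ‖x (r + 1) ω - x r ω‖ ^ 2 ∂μ) ∧
      ((∫ ω, ‖v (r + 1) ω - Gmap f (x (r + 1) ω)‖ ^ 2 ∂μ) ≤
          (∫ ω, ‖v r ω - Gmap f (x r ω)‖ ^ 2 ∂μ)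
          + L ^ 2 / (S2 : ℝ) * ∫ ω, ‖x (r + 1) ω - x r ω‖ ^ 2 ∂μ) :=
  stmt10_general m d n q S2 hn hS2 L α f hdiff hlip W hWsymm hW1 Ω μ J hJmeas hJunif hJindep x0 x v
    y hx0 hy0 hxrec hvfull hvest hyrec
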